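/- (Weak BV estimate, Lemma 1.) Let m : Fin N → ℝ. Suppose u : ℝ → Fin N → E is continuously differentiable in time, p : ℝ → Fin N → ℝ is continuous, and for every time t and every node i the semi-discrete scheme holds: m i • (du/dt)(t) i = RHS i (computed from u t and p t), and the discrete continuity constraint holds at every node. Then for every T > 0, ∫_0^T Σ_i Σ_{j ≠ i} ((dadd i j / 2)·‖u t j - u t i‖² + (dp i j / 2)·(p t j - p t i)²) dt = Σ_i m i·‖u 0 i‖²/2 - Σ_i m i·‖u T i‖²/2. -/

import Mathlib

/-!
Testing the momentum equation at node `i` against `u i` and summing over `i` gives the rate of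
change of the kinetic energy `∑ i, m i * ‖u i‖ ^ 2 / 2`. Pairing each edge term `(i, j)` with
`(j, i)`: the artificial viscosity `dadd` contributes `-(dadd i j / 2) * ‖u j - u i‖ ^ 2`, the
convective terms cancel because `ã` is antisymmetric, and the pressure terms reduce, through the
discrete continuity constraint, to `-(dp i j / 2) * (p j - p i) ^ 2`. Integrating in time gives
the energy balance.
-/

open scoped RealInnerProductSpace
open Finset

section EdgeSums

variable {ι : Type*} [Fintype ι] [DecidableEq ι]

theorem sum_sum_erase_comm {M : Type*} [AddCommMonoid M] (f : ι → ι → M) :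
    ∑ i, ∑ j ∈ univ.erase i, f i j = ∑ i, ∑ j ∈ univ.erase i, f j i :=
  sum_comm' fun _ _ => by simp [eq_comm, and_comm]

theorem sum_sum_erase_eq_half_sum_add_swap (f : ι → ι → ℝ) :
    ∑ i, ∑ j ∈ univ.erase i, f i j = (1 / 2) * ∑ i, ∑ j ∈ univ.erase i, (f i j + f j i) := by
  rw [sum_congr rfl fun i _ => sum_add_distrib, sum_add_distrib, ← sum_sum_erase_comm f]
  ring

theorem sum_sum_erase_eq_zero_of_antisymm {f : ι → ι → ℝ} (hf : ∀ i j, f j i = -f i j) :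
    ∑ i, ∑ j ∈ univ.erase i, f i j = 0 := by
  have hpair : ∀ i j, f i j + f j i = 0 := fun i j => by rw [hf]; ring
  rw [sum_sum_erase_eq_half_sum_add_swap]
  simp only [hpair, sum_const_zero, mul_zero]

theorem sum_sum_erase_sub_mul_of_antisymm {b : ι → ι → ℝ} (hb : ∀ i j, b j i = -b i j)
    (q : ι → ℝ) :
    ∑ i, ∑ j ∈ univ.erase i, (q j - q i) * b i j = -2 * ∑ i, q i * ∑ j ∈ univ.erase i, b i j := by
  have hswap : ∑ i, ∑ j ∈ univ.erase i, q j * b i j = -∑ i, ∑ j ∈ univ.erase i, q i * b i j := by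
    rw [sum_sum_erase_comm, ← sum_neg_distrib]
    refine sum_congr rfl fun i _ => ?_
    rw [← sum_neg_distrib]
    exact sum_congr rfl fun j _ => by rw [hb]; ring
  simp only [sub_mul, sum_sub_distrib, hswap, ← mul_sum]
  ring

variable {E : Type*} [NormedAddCommGroup E] [InnerProductSpace ℝ E]

theorem sum_sum_erase_mul_inner_sub_of_symm {w : ι → ι → ℝ} (hw : ∀ i j, w i j = w j i)
    (v : ι → E) :
    ∑ i, ∑ j ∈ univ.erase i, w i j * ⟪v j - v i, v i⟫
      = -(1 / 2) * ∑ i, ∑ j ∈ univ.erase i, w i j * ‖v j - v i‖ ^ 2 := by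
  rw [sum_sum_erase_eq_half_sum_add_swap, neg_mul, ← mul_neg, ← sum_neg_distrib]
  congr 1
  refine sum_congr rfl fun i _ => ?_
  rw [← sum_neg_distrib]
  refine sum_congr rfl fun j _ => ?_
  rw [hw j i, norm_sub_sq_real]
  simp only [inner_sub_left, real_inner_self_eq_norm_sq, real_inner_comm (v i) (v j)]
  ring

end EdgeSums

noncomputable section

namespace SemiDiscrete

variable {ι : Type*} [Fintype ι] {E : Type*} [NormedAddCommGroup E]

def kineticEnergy (m : ι → ℝ) (v : ι → E) : ℝ :=
  ∑ i, m i * ‖v i‖ ^ 2 / 2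

theorem hasDerivAt_kineticEnergy [InnerProductSpace ℝ E] (m : ι → ℝ) {u : ℝ → ι → E}
    {u' : ι → E} {t : ℝ}
    (hu : ∀ i, HasDerivAt (fun s => u s i) (u' i) t) :
    HasDerivAt (fun s => kineticEnergy m (u s)) (∑ i, ⟪m i • u' i, u t i⟫) t := by
  refine HasDerivAt.fun_sum fun i _ => ?_
  refine (((hu i).norm_sq.const_mul (m i)).div_const 2).congr_deriv ?_
  rw [real_inner_smul_left, real_inner_comm]
  ring

variable [DecidableEq ι]

def dissipation (dadd dp : ι → ι → ℝ) (v : ι → E) (q : ι → ℝ) : ℝ :=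
  ∑ i, ∑ j ∈ univ.erase i, ((dadd i j / 2) * ‖v j - v i‖ ^ 2 + (dp i j / 2) * (q j - q i) ^ 2)

theorem continuous_dissipation (dadd dp : ι → ι → ℝ) {u : ℝ → ι → E} {p : ℝ → ι → ℝ}
    (hu : ∀ i, Continuous fun t => u t i) (hp : ∀ i, Continuous fun t => p t i) :
    Continuous fun t => dissipation dadd dp (u t) (p t) := by
  unfold dissipation
  fun_prop

variable [InnerProductSpace ℝ E]

def momentumRHS (dadd : ι → ι → ℝ) (c : ι → ι → E) (v : ι → E) (q : ι → ℝ) (i : ι) : E :=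
  (∑ j ∈ univ.erase i,
      ((dadd i j - ⟪((1 : ℝ) / 2) • (v j + v i), c i j⟫) • (v j - v i) - (q j - q i) • c i j))
    - (∑ j ∈ univ.erase i, ⟪((1 : ℝ) / 2) • (v j + v i), c i j⟫) • v i

theorem inner_momentumRHS_self (dadd : ι → ι → ℝ) (c : ι → ι → E) (v : ι → E) (q : ι → ℝ)
    (i : ι) :
    ⟪momentumRHS dadd c v q i, v i⟫ = ∑ j ∈ univ.erase i,
      (dadd i j * ⟪v j - v i, v i⟫ - ⟪((1 : ℝ) / 2) • (v j + v i), c i j⟫ * ⟪v j, v i⟫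
        - (q j - q i) * ⟪c i j, v i⟫) := by
  rw [momentumRHS, inner_sub_left, sum_inner, real_inner_smul_left, sum_mul, ← sum_sub_distrib]
  refine sum_congr rfl fun j _ => ?_
  simp only [inner_sub_left, real_inner_smul_left]
  ring

theorem sum_inner_momentumRHS_self {dadd dp : ι → ι → ℝ} {c : ι → ι → E}
    (hc : ∀ i j, c j i = -c i j) (hdadd : ∀ i j, dadd i j = dadd j i)
    (hdp : ∀ i j, dp i j = dp j i) {v : ι → E} {q : ι → ℝ}
    (hcont : ∀ i, ∑ j ∈ univ.erase i, (dp i j * (q j - q i) - ⟪v j + v i, c i j⟫) = 0) :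
    ∑ i, ⟪momentumRHS dadd c v q i, v i⟫ = -dissipation dadd dp v q := by
  have convective : ∑ i, ∑ j ∈ univ.erase i,
      ⟪((1 : ℝ) / 2) • (v j + v i), c i j⟫ * ⟪v j, v i⟫ = 0 :=
    sum_sum_erase_eq_zero_of_antisymm fun i j => by
      rw [hc, add_comm, real_inner_comm (v i)]
      simp only [inner_neg_right, neg_mul]
  -- `⟪v j + v i, c i j⟫` and `dp i j * (q j - q i)` are both antisymmetric with equal row sums.
  have pressure : ∑ i, ∑ j ∈ univ.erase i, (q j - q i) * ⟪c i j, v i⟫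
      = (1 / 2) * ∑ i, ∑ j ∈ univ.erase i, dp i j * (q j - q i) ^ 2 := calc
    _ = (1 / 2) * ∑ i, ∑ j ∈ univ.erase i, (q j - q i) * ⟪v j + v i, c i j⟫ := by
      rw [sum_sum_erase_eq_half_sum_add_swap]
      congr 1
      refine sum_congr rfl fun i _ => sum_congr rfl fun j _ => ?_
      rw [hc i j, inner_neg_left, inner_add_left, real_inner_comm (v i) (c i j),
        real_inner_comm (v j) (c i j)]
      ring
    _ = (1 / 2) * ∑ i, ∑ j ∈ univ.erase i, (q j - q i) * (dp i j * (q j - q i)) := by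
      have hrow (i : ι) : ∑ j ∈ univ.erase i, dp i j * (q j - q i)
          = ∑ j ∈ univ.erase i, ⟪v j + v i, c i j⟫ := by
        rw [← sub_eq_zero, ← sum_sub_distrib]
        exact hcont i
      rw [sum_sum_erase_sub_mul_of_antisymm (fun i j => by rw [hc, add_comm, inner_neg_right]),
        sum_sum_erase_sub_mul_of_antisymm (b := fun i j => dp i j * (q j - q i))
          (fun i j => by rw [hdp]; ring)]
      simp only [hrow]
    _ = _ := by simp only [sq, mul_left_comm]
  simp only [inner_momentumRHS_self, sum_sub_distrib, sum_sum_erase_mul_inner_sub_of_symm hdadd,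
    convective, pressure, dissipation, sum_add_distrib, div_mul_eq_mul_div, ← sum_div]
  ring

end SemiDiscrete

end

open SemiDiscrete in
theorem weak_BV_estimate_general
    (d N : ℕ)
    (m : Fin N → ℝ)
    (c : Fin N → Fin N → EuclideanSpace ℝ (Fin d))
    (hc : ∀ i j, c j i = -c i j)
    (dadd dp : Fin N → Fin N → ℝ)
    (hdadd_symm : ∀ i j, dadd i j = dadd j i)
    (hdp_symm : ∀ i j, dp i j = dp j i)
    (u : ℝ → Fin N → EuclideanSpace ℝ (Fin d))
    (u' : ℝ → Fin N → EuclideanSpace ℝ (Fin d))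
    (p : ℝ → Fin N → ℝ)
    (hu' : ∀ i t, HasDerivAt (fun s => u s i) (u' t i) t)
    (hpcont : ∀ i, Continuous fun t => p t i)
    (hscheme : ∀ t i, m i • u' t i =
      (∑ j ∈ Finset.univ.erase i,
        ((dadd i j - ⟪((1 : ℝ) / 2) • (u t j + u t i), c i j⟫) • (u t j - u t i)
          - (p t j - p t i) • c i j))
      - (∑ j ∈ Finset.univ.erase i,
          ⟪((1 : ℝ) / 2) • (u t j + u t i), c i j⟫) • u t i)
    (hcont : ∀ t i, ∑ j ∈ Finset.univ.erase i,
      (dp i j * (p t j - p t i) - ⟪u t j + u t i, c i j⟫) = 0) :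
    ∀ T : ℝ, 0 < T →
      (∫ t in (0 : ℝ)..T, ∑ i, ∑ j ∈ Finset.univ.erase i,
        ((dadd i j / 2) * ‖u t j - u t i‖ ^ 2 + (dp i j / 2) * (p t j - p t i) ^ 2))
      = (∑ i, m i * ‖u 0 i‖ ^ 2 / 2) - ∑ i, m i * ‖u T i‖ ^ 2 / 2 := by
  intro T _
  have energy_balance (t : ℝ) :
      HasDerivAt (fun s => -kineticEnergy m (u s)) (dissipation dadd dp (u t) (p t)) t := by
    have h := (hasDerivAt_kineticEnergy m fun i => hu' i t).neg
    have hrhs (i : Fin N) : m i • u' t i = momentumRHS dadd c (u t) (p t) i := hscheme t i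
    rwa [sum_congr rfl fun i _ => by rw [hrhs i],
      sum_inner_momentumRHS_self hc hdadd_symm hdp_symm (hcont t), neg_neg] at h
  have hD := continuous_dissipation dadd dp (fun i => continuous_iff_continuousAt.2 fun t =>
    (hu' i t).continuousAt) hpcont
  show ∫ t in (0 : ℝ)..T, dissipation dadd dp (u t) (p t)
    = kineticEnergy m (u 0) - kineticEnergy m (u T)
  rw [intervalIntegral.integral_eq_sub_of_hasDerivAt (fun t _ => energy_balance t)
    (hD.intervalIntegrable 0 T)]
  ring

/-- Weak BV estimate (Lemma 1): along solutions of the semi-discrete scheme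
satisfying the discrete continuity constraint, the time integral of the total
dissipation equals the total kinetic energy lost between times `0` and `T`. -/
theorem weak_BV_estimate
    (d N : ℕ) (hd : 1 ≤ d) (hN : 1 ≤ N)
    (m : Fin N → ℝ)
    (c : Fin N → Fin N → EuclideanSpace ℝ (Fin d))
    (hc : ∀ i j, c j i = -c i j)
    (dadd dp : Fin N → Fin N → ℝ)
    (hdadd_symm : ∀ i j, dadd i j = dadd j i)
    (hdp_symm : ∀ i j, dp i j = dp j i)
    (u : ℝ → Fin N → EuclideanSpace ℝ (Fin d))
    (u' : ℝ → Fin N → EuclideanSpace ℝ (Fin d))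
    (p : ℝ → Fin N → ℝ)
    (hu' : ∀ i t, HasDerivAt (fun s => u s i) (u' t i) t)
    (hu'cont : ∀ i, Continuous fun t => u' t i)
    (hpcont : ∀ i, Continuous fun t => p t i)
    (hscheme : ∀ t i, m i • u' t i =
      (∑ j ∈ Finset.univ.erase i,
        ((dadd i j - ⟪((1 : ℝ) / 2) • (u t j + u t i), c i j⟫) • (u t j - u t i)
          - (p t j - p t i) • c i j))
      - (∑ j ∈ Finset.univ.erase i,
          ⟪((1 : ℝ) / 2) • (u t j + u t i), c i j⟫) • u t i)
    (hcont : ∀ t i, ∑ j ∈ Finset.univ.erase i,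
      (dp i j * (p t j - p t i) - ⟪u t j + u t i, c i j⟫) = 0) :
    ∀ T : ℝ, 0 < T →
      (∫ t in (0 : ℝ)..T, ∑ i, ∑ j ∈ Finset.univ.erase i,
        ((dadd i j / 2) * ‖u t j - u t i‖ ^ 2 + (dp i j / 2) * (p t j - p t i) ^ 2))
      = (∑ i, m i * ‖u 0 i‖ ^ 2 / 2) - ∑ i, m i * ‖u T i‖ ^ 2 / 2 :=
  weak_BV_estimate_general d N m c hc dadd dp hdadd_symm hdp_symm u u' p hu' hpcont hscheme hcont
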